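/- Let Γ be a finite simple graph of type II, and let v₁, v₂ be distinct non-adjacent vertices (d(v₁,v₂) ≥ 2). For i = 1, 2, let H_i be a v_i-halfspace, i.e., H_i = St(v_i) ∪ A_i where A_i is a nonempty union of vertex sets of connected components of the induced subgraph on the complement of St(v_i), and H_i is a proper subset of the vertex set of Γ. Suppose H₁ ∩ H₂ ⊄ St(v₁). Then also H₁ ∩ H₂ ⊄ St(v₂), and exactly one of the following three statements holds: (1) v₁ ∈ H₂ and v₂ ∈ H₁; (2) H₂ ⊊ H₁; (3) H₁ ⊊ H₂. -/
import Mathlib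


open SimpleGraph

variable {V : Type*}

/-- The closed star of a vertex: the vertex together with its neighbors. -/
def gstar (G : SimpleGraph V) (v : V) : Set V := insert v (G.neighborSet v)

/-- `a` and `b` lie in the same connected component of the subgraph induced on `s`. -/
def SameComp (G : SimpleGraph V) (s : Set V) (a b : V) : Prop :=
  ∃ (ha : a ∈ s) (hb : b ∈ s), (G.induce s).Reachable ⟨a, ha⟩ ⟨b, hb⟩

/-- `a` and `b` lie in different connected components of the subgraph induced on `s`. -/
def DiffComp (G : SimpleGraph V) (s : Set V) (a b : V) : Prop :=
  a ∈ s ∧ b ∈ s ∧ ¬ SameComp G s a b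

/-- `Γ` is of weak type II. -/
def WeakTypeII (G : SimpleGraph V) : Prop :=
  G.Connected ∧ ∀ v w : V, G.dist v w = 2 →
    (G.induce ((G.neighborSet v ∩ G.neighborSet w)ᶜ)).Connected

/-- `Γ` is of type II. -/
def TypeII (G : SimpleGraph V) : Prop :=
  G.Connected ∧ ∀ v w : V, v ≠ w →
    (G.induce ((G.neighborSet v ∩ G.neighborSet w)ᶜ)).Connected

/-- `H` is a `v`-halfspace: `H = St(v) ∪ A` where `A` is a nonempty union of connected
components of the complement of `St(v)`, and some component is not contained in `A`. -/
def IsHalfspace (G : SimpleGraph V) (v : V) (H : Set V) : Prop :=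
  ∃ A : Set V, A.Nonempty ∧ A ⊆ (gstar G v)ᶜ ∧
    (∀ a ∈ A, ∀ b : V, SameComp G (gstar G v)ᶜ a b → b ∈ A) ∧
    (∃ c ∈ (gstar G v)ᶜ, c ∉ A) ∧
    H = gstar G v ∪ A

lemma SameComp.symm' {G : SimpleGraph V} {s : Set V} {a b : V}
    (h : SameComp G s a b) : SameComp G s b a := by
  obtain ⟨ha, hb, hr⟩ := h
  exact ⟨hb, ha, hr.symm⟩

lemma SameComp.trans' {G : SimpleGraph V} {s : Set V} {a b c : V}
    (h : SameComp G s a b) (h' : SameComp G s b c) : SameComp G s a c := by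
  obtain ⟨ha, hb, hr⟩ := h
  obtain ⟨hb', hc, hr'⟩ := h'
  exact ⟨ha, hc, hr.trans hr'⟩

lemma sameComp_of_adj {G : SimpleGraph V} {s : Set V} {a b : V}
    (ha : a ∈ s) (hb : b ∈ s) (hab : G.Adj a b) : SameComp G s a b :=
  ⟨ha, hb, SimpleGraph.Adj.reachable (by simpa using hab)⟩

lemma walk_ind {G : SimpleGraph V} {D : Set V} (P : V → Prop)
    (hstep : ∀ x y : V, x ∈ D → y ∈ D → G.Adj x y → P x → P y) :
    ∀ {x y : ↥D}, (G.induce D).Walk x y → P ↑x → P ↑y := by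
  intro x y w
  induction w with
  | nil => exact id
  | @cons a b c hadj p ih =>
      intro hx
      exact ih (hstep ↑a ↑b a.2 b.2 (by simpa using hadj) hx)

lemma mem_gstar_compl {G : SimpleGraph V} {v x : V} :
    x ∈ (gstar G v)ᶜ ↔ x ≠ v ∧ ¬ G.Adj v x := by
  simp [gstar]

lemma key_lemma (G : SimpleGraph V) (h : TypeII G) (v₁ v₂ : V)
    (hne : v₁ ≠ v₂) (hnadj : ¬ G.Adj v₁ v₂)
    (m : V) (hm : m ∈ (gstar G v₁)ᶜ) (hm2 : ¬ SameComp G (gstar G v₁)ᶜ m v₂) :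
    m ∈ (gstar G v₂)ᶜ ∧ SameComp G (gstar G v₂)ᶜ m v₁ := by
  have hv2S1 : v₂ ∈ (gstar G v₁)ᶜ :=
    mem_gstar_compl.mpr ⟨fun e => hne e.symm, hnadj⟩
  have hv1S2 : v₁ ∈ (gstar G v₂)ᶜ :=
    mem_gstar_compl.mpr ⟨hne, fun a => hnadj a.symm⟩
  have hmS2 : m ∈ (gstar G v₂)ᶜ := by
    rw [mem_gstar_compl]
    constructor
    · rintro rfl
      exact hm2 ⟨hm, hv2S1, Reachable.refl _⟩
    · intro hadj
      exact hm2 (sameComp_of_adj hm hv2S1 hadj.symm)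
  refine ⟨hmS2, ?_⟩
  by_contra hN
  set D : Set V := (G.neighborSet v₁ ∩ G.neighborSet v₂)ᶜ with hD
  have hconn : (G.induce D).Connected := h.2 v₁ v₂ hne
  have hmD : m ∈ D := fun hmem => (mem_gstar_compl.mp hm).2 hmem.1
  have hv1D : v₁ ∈ D := fun hmem => G.irrefl hmem.1
  obtain ⟨w⟩ := hconn.preconnected ⟨m, hmD⟩ ⟨v₁, hv1D⟩
  set P : V → Prop := fun x =>
    x ∈ (gstar G v₁)ᶜ ∧ x ∈ (gstar G v₂)ᶜ ∧
      SameComp G (gstar G v₁)ᶜ m x ∧ SameComp G (gstar G v₂)ᶜ m x with hP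
  have hstep : ∀ x y : V, x ∈ D → y ∈ D → G.Adj x y → P x → P y := by
    intro x y hxD hyD hxy ⟨hx1, hx2, hsc1, hsc2⟩
    by_cases hy1 : y ∈ (gstar G v₁)ᶜ
    · by_cases hy2 : y ∈ (gstar G v₂)ᶜ
      · exact ⟨hy1, hy2, hsc1.trans' (sameComp_of_adj hx1 hy1 hxy),
          hsc2.trans' (sameComp_of_adj hx2 hy2 hxy)⟩
      · exfalso
        have hy2' : y ∈ gstar G v₂ := not_not.mp hy2
        have hyadj2 : G.Adj v₂ y := by
          rcases hy2' with rfl | hy2'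
          · exact absurd hxy.symm ((mem_gstar_compl.mp hx2).2 ∘ id)
          · exact hy2'
        exact hm2 ((hsc1.trans' (sameComp_of_adj hx1 hy1 hxy)).trans'
          (sameComp_of_adj hy1 hv2S1 hyadj2.symm))
    · exfalso
      have hy1' : y ∈ gstar G v₁ := not_not.mp hy1
      have hyadj1 : G.Adj v₁ y := by
        rcases hy1' with rfl | hy1'
        · exact absurd hxy.symm ((mem_gstar_compl.mp hx1).2 ∘ id)
        · exact hy1'
      have hynadj2 : ¬ G.Adj v₂ y := fun ha => hyD ⟨hyadj1, ha⟩
      have hynev2 : y ≠ v₂ := by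
        rintro rfl; exact hnadj hyadj1
      have hy2 : y ∈ (gstar G v₂)ᶜ := mem_gstar_compl.mpr ⟨hynev2, hynadj2⟩
      exact hN ((hsc2.trans' (sameComp_of_adj hx2 hy2 hxy)).trans'
        (sameComp_of_adj hy2 hv1S2 hyadj1.symm))
  have hPm : P m := ⟨hm, hmS2, ⟨hm, hm, Reachable.refl _⟩, ⟨hmS2, hmS2, Reachable.refl _⟩⟩
  exact ((walk_ind P hstep w hPm).1 (Set.mem_insert v₁ _))

/-- Γ of type II, `v₁, v₂` distinct and non-adjacent, `H_i` a `v_i`-halfspace,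
and `H₁ ∩ H₂ ⊄ St(v₁)`.  Then `H₁ ∩ H₂ ⊄ St(v₂)`, and exactly one of the following holds:
(1) `v₁ ∈ H₂` and `v₂ ∈ H₁`; (2) `H₂ ⊊ H₁`; (3) `H₁ ⊊ H₂`. -/
theorem stmt_14 [Fintype V] (G : SimpleGraph V) (h : TypeII G)
    (v₁ v₂ : V) (hne : v₁ ≠ v₂) (hnadj : ¬ G.Adj v₁ v₂)
    (H₁ H₂ : Set V) (h₁ : IsHalfspace G v₁ H₁) (h₂ : IsHalfspace G v₂ H₂)
    (hcross : ¬ H₁ ∩ H₂ ⊆ gstar G v₁) :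
    ¬ H₁ ∩ H₂ ⊆ gstar G v₂ ∧
      (((v₁ ∈ H₂ ∧ v₂ ∈ H₁) ∧ ¬ H₂ ⊂ H₁ ∧ ¬ H₁ ⊂ H₂) ∨
       (¬ (v₁ ∈ H₂ ∧ v₂ ∈ H₁) ∧ H₂ ⊂ H₁ ∧ ¬ H₁ ⊂ H₂) ∨
       (¬ (v₁ ∈ H₂ ∧ v₂ ∈ H₁) ∧ ¬ H₂ ⊂ H₁ ∧ H₁ ⊂ H₂)) := by
  obtain ⟨A₁, hA₁ne, hA₁sub, hA₁cl, ⟨c₁, hc₁, hc₁n⟩, rfl⟩ := h₁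
  obtain ⟨A₂, hA₂ne, hA₂sub, hA₂cl, ⟨c₂, hc₂, hc₂n⟩, rfl⟩ := h₂
  have hnadj' : ¬ G.Adj v₂ v₁ := fun a => hnadj a.symm
  have hv2S1 : v₂ ∈ (gstar G v₁)ᶜ :=
    mem_gstar_compl.mpr ⟨fun e => hne e.symm, hnadj⟩
  have hv1S2 : v₁ ∈ (gstar G v₂)ᶜ :=
    mem_gstar_compl.mpr ⟨hne, hnadj'⟩
  have key12 := fun m hm hm2 => key_lemma G h v₁ v₂ hne hnadj m hm hm2
  have key21 := fun m hm hm2 => key_lemma G h v₂ v₁ hne.symm hnadj' m hm hm2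
  by_cases hK1 : v₂ ∈ A₁ <;> by_cases hK2 : v₁ ∈ A₂
  · -- Case (i): condition (1)
    have hv1H2 : v₁ ∈ gstar G v₂ ∪ A₂ := Or.inr hK2
    have hv2H1 : v₂ ∈ gstar G v₁ ∪ A₁ := Or.inr hK1
    -- c₁ ∈ H₂ \ H₁
    have hc₁sc : ¬ SameComp G (gstar G v₁)ᶜ c₁ v₂ := fun hsc =>
      hc₁n (hA₁cl v₂ hK1 c₁ hsc.symm')
    obtain ⟨hc₁S2, hc₁r⟩ := key12 c₁ hc₁ hc₁sc
    have hc₁A2 : c₁ ∈ A₂ := hA₂cl v₁ hK2 c₁ hc₁r.symm'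
    have hc₁nH1 : c₁ ∉ gstar G v₁ ∪ A₁ := by
      rintro (hmem | hmem)
      · exact hc₁ hmem
      · exact hc₁n hmem
    -- c₂ ∈ H₁ \ H₂
    have hc₂sc : ¬ SameComp G (gstar G v₂)ᶜ c₂ v₁ := fun hsc =>
      hc₂n (hA₂cl v₁ hK2 c₂ hsc.symm')
    obtain ⟨hc₂S1, hc₂r⟩ := key21 c₂ hc₂ hc₂sc
    have hc₂A1 : c₂ ∈ A₁ := hA₁cl v₂ hK1 c₂ hc₂r.symm'
    have hc₂nH2 : c₂ ∉ gstar G v₂ ∪ A₂ := by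
      rintro (hmem | hmem)
      · exact hc₂ hmem
      · exact hc₂n hmem
    refine ⟨fun hsub => ?_, Or.inl ⟨⟨hv1H2, hv2H1⟩, ?_, ?_⟩⟩
    · exact hv1S2 (hsub ⟨Or.inl (Set.mem_insert v₁ _), hv1H2⟩)
    · exact fun hss => hc₁nH1 (hss.subset (Or.inr hc₁A2))
    · exact fun hss => hc₂nH2 (hss.subset (Or.inr hc₂A1))
  · -- Case (ii): H₂ ⊊ H₁
    have hsub : gstar G v₂ ∪ A₂ ⊆ gstar G v₁ ∪ A₁ := by
      rintro u (hu | hu)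
      · rcases hu with rfl | hu
        · exact Or.inr hK1
        · by_cases huS1 : u ∈ gstar G v₁
          · exact Or.inl huS1
          · exact Or.inr (hA₁cl v₂ hK1 u
              (sameComp_of_adj hv2S1 huS1 hu))
      · have hu2 : ¬ SameComp G (gstar G v₂)ᶜ u v₁ := fun hsc =>
          hK2 (hA₂cl u hu v₁ hsc)
        obtain ⟨huS1, hur⟩ := key21 u (hA₂sub hu) hu2
        exact Or.inr (hA₁cl v₂ hK1 u hur.symm')
    have hv1nH2 : v₁ ∉ gstar G v₂ ∪ A₂ := by
      rintro (hmem | hmem)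
      · exact hv1S2 hmem
      · exact hK2 hmem
    have hssub : gstar G v₂ ∪ A₂ ⊂ gstar G v₁ ∪ A₁ :=
      ⟨hsub, fun h' => hv1nH2 (h' (Or.inl (Set.mem_insert v₁ _)))⟩
    obtain ⟨a₂, ha₂⟩ := hA₂ne
    refine ⟨fun hsub' => ?_, Or.inr (Or.inl ⟨fun hc => hv1nH2 hc.1, hssub,
      fun hss => hv1nH2 (hss.subset (Or.inl (Set.mem_insert v₁ _)))⟩)⟩
    · exact (hA₂sub ha₂) (hsub' ⟨hsub (Or.inr ha₂), Or.inr ha₂⟩)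
  · -- Case (iii): H₁ ⊊ H₂
    have hsub : gstar G v₁ ∪ A₁ ⊆ gstar G v₂ ∪ A₂ := by
      rintro u (hu | hu)
      · rcases hu with rfl | hu
        · exact Or.inr hK2
        · by_cases huS2 : u ∈ gstar G v₂
          · exact Or.inl huS2
          · exact Or.inr (hA₂cl v₁ hK2 u
              (sameComp_of_adj hv1S2 huS2 hu))
      · have hu2 : ¬ SameComp G (gstar G v₁)ᶜ u v₂ := fun hsc =>
          hK1 (hA₁cl u hu v₂ hsc)
        obtain ⟨huS2, hur⟩ := key12 u (hA₁sub hu) hu2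
        exact Or.inr (hA₂cl v₁ hK2 u hur.symm')
    have hv2nH1 : v₂ ∉ gstar G v₁ ∪ A₁ := by
      rintro (hmem | hmem)
      · exact hv2S1 hmem
      · exact hK1 hmem
    have hssub : gstar G v₁ ∪ A₁ ⊂ gstar G v₂ ∪ A₂ :=
      ⟨hsub, fun h' => hv2nH1 (h' (Or.inl (Set.mem_insert v₂ _)))⟩
    obtain ⟨a₁, ha₁⟩ := hA₁ne
    have ha₁sc : ¬ SameComp G (gstar G v₁)ᶜ a₁ v₂ := fun hsc =>
      hK1 (hA₁cl a₁ ha₁ v₂ hsc)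
    obtain ⟨ha₁S2, _⟩ := key12 a₁ (hA₁sub ha₁) ha₁sc
    refine ⟨fun hsub' => ?_, Or.inr (Or.inr ⟨fun hc => hv2nH1 hc.2,
      fun hss => hv2nH1 (hss.subset (Or.inl (Set.mem_insert v₂ _))), hssub⟩)⟩
    · exact ha₁S2 (hsub' ⟨Or.inr ha₁, hsub (Or.inr ha₁)⟩)
  · -- Case (iv): contradiction with hcross
    exfalso
    rw [Set.not_subset] at hcross
    obtain ⟨p, ⟨hpH1, hpH2⟩, hpS1⟩ := hcross
    have hpA1 : p ∈ A₁ := hpH1.resolve_left hpS1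
    have hpsc : ¬ SameComp G (gstar G v₁)ᶜ p v₂ := fun hsc =>
      hK1 (hA₁cl p hpA1 v₂ hsc)
    obtain ⟨hpS2, hpr⟩ := key12 p (hA₁sub hpA1) hpsc
    have hpA2 : p ∈ A₂ := hpH2.resolve_left hpS2
    exact hK2 (hA₂cl p hpA2 v₁ hpr)
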